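/- arXiv:1012.4221 — 2 statements merged into one kernel-verified Lean document; each statement's English description precedes it below -/
import Mathlib

section
/- Let m, n ≥ 1. The set S_{m,n} of bipartite separable states is a convex subset of the real vector space of mn×mn complex Hermitian matrices, and its set of extreme points is exactly the set of pure product states {P ⊗ Q : P ∈ P_m, Q ∈ P_n}, where ⊗ denotes the Kronecker product. -/
/-!
A density matrix is a convex combination of pure states `x x*` (spectral theorem) and the
Kronecker product is bilinear, so `S_{m,n}` is the convex hull of the pure product states and
its extreme points are pure products. Conversely, a pure product `x x* ⊗ y y*` is the pure state
of `x ⊗ y`, and a pure state is extreme even among all density matrices: if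
`x x* = a σ + b τ` with `a, b > 0` and `σ, τ ⪰ 0`, then `σ` vanishes on `x^⊥`, which forces
`σ = x x*` once `tr σ = 1`.
-/

open Matrix Kronecker ComplexOrder

/-- A pure state: a rank-one Hermitian matrix of trace one. -/
def IsPureState {m : ℕ} (A : Matrix (Fin m) (Fin m) ℂ) : Prop :=
  A.IsHermitian ∧ A.rank = 1 ∧ A.trace = 1

/-- A density matrix: a positive semidefinite (Hermitian) matrix of trace one. -/
def IsDensityMatrix {m : ℕ} (A : Matrix (Fin m) (Fin m) ℂ) : Prop :=
  A.PosSemidef ∧ A.trace = 1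

/-- The set of bipartite separable states, the convex hull of Kronecker products of
density matrices. -/
noncomputable def SepStates (m n : ℕ) : Set (Matrix (Fin m × Fin n) (Fin m × Fin n) ℂ) :=
  convexHull ℝ {C | ∃ A B, IsDensityMatrix A ∧ IsDensityMatrix B ∧ C = A ⊗ₖ B}

theorem LinearMap.apply_mem_convexHull_image2 {𝕜 E F G : Type*} [CommSemiring 𝕜] [PartialOrder 𝕜]
    [AddCommMonoid E] [AddCommMonoid F] [AddCommMonoid G] [Module 𝕜 E] [Module 𝕜 F] [Module 𝕜 G]
    (f : E →ₗ[𝕜] F →ₗ[𝕜] G) {s : Set E} {t : Set F} {x : E} {y : F}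
    (hx : x ∈ convexHull 𝕜 s) (hy : y ∈ convexHull 𝕜 t) :
    f x y ∈ convexHull 𝕜 (Set.image2 (fun a b => f a b) s t) := by
  have hleft : ∀ a ∈ s, f a y ∈ convexHull 𝕜 (Set.image2 (fun a b => f a b) s t) := by
    intro a ha
    have hay : f a y ∈ f a '' convexHull 𝕜 t := Set.mem_image_of_mem _ hy
    rw [LinearMap.image_convexHull] at hay
    exact convexHull_mono (Set.image_subset_image2_right ha) hay
  have hxy : f x y ∈ f.flip y '' convexHull 𝕜 s := Set.mem_image_of_mem _ hx
  rw [LinearMap.image_convexHull] at hxy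
  exact convexHull_min (Set.image_subset_iff.2 hleft) (convex_convexHull 𝕜 _) hxy

theorem Matrix.rank_ne_zero_of_ne_zero {m n K : Type*} [Field K] [Fintype n] [DecidableEq n]
    {A : Matrix m n K} (hA : A ≠ 0) : A.rank ≠ 0 := by
  rwa [rank, Ne, Submodule.finrank_eq_zero, LinearMap.range_eq_bot, ← toLin'_apply',
    LinearEquiv.map_eq_zero_iff]

theorem Matrix.rank_vecMulVec_eq_one {n K : Type*} [Field K] [Fintype n] [DecidableEq n]
    {w v : n → K} (hw : w ≠ 0) (hv : v ≠ 0) : (vecMulVec w v).rank = 1 :=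
  le_antisymm (rank_vecMulVec_le w v)
    (Nat.one_le_iff_ne_zero.2 (rank_ne_zero_of_ne_zero (vecMulVec_ne_zero hw hv)))

theorem Matrix.trace_vecMulVec_self_star {n R : Type*} [Fintype n] [CommSemiring R] [StarRing R]
    (x : n → R) : (vecMulVec x (star x)).trace = star x ⬝ᵥ x := by
  rw [trace_vecMulVec, dotProduct_comm]

section

variable {𝕜 k l : Type*} [RCLike 𝕜] [Fintype k] [Fintype l]

theorem Matrix.IsHermitian.star_eigenvectorBasis_dotProduct_self [DecidableEq k]
    {A : Matrix k k 𝕜} (hA : A.IsHermitian) (i : k) :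
    star (hA.eigenvectorBasis i).ofLp ⬝ᵥ (hA.eigenvectorBasis i).ofLp = 1 := by
  rw [dotProduct_comm, ← EuclideanSpace.inner_eq_star_dotProduct, inner_self_eq_norm_sq_to_K,
    hA.eigenvectorBasis.orthonormal.1 i]
  norm_num

theorem Matrix.IsHermitian.eq_sum_eigenvalues_smul_vecMulVec [DecidableEq k]
    {A : Matrix k k 𝕜} (hA : A.IsHermitian) :
    A = ∑ i, hA.eigenvalues i •
      vecMulVec (hA.eigenvectorBasis i).ofLp (star (hA.eigenvectorBasis i).ofLp) := by
  conv_lhs => rw [hA.spectral_theorem, Unitary.conjStarAlgAut_apply]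
  ext i j
  rw [mul_apply]
  simp only [mul_diagonal, Function.comp_apply, sum_apply, smul_apply, vecMulVec_apply,
    star_eq_conjTranspose, conjTranspose_apply, eigenvectorUnitary_apply,
    RCLike.real_smul_eq_coe_mul, Pi.star_apply, RCLike.star_def]
  exact Finset.sum_congr rfl fun _ _ => by ring

theorem Matrix.IsHermitian.sum_eigenvalues_eq_one [DecidableEq k] {A : Matrix k k 𝕜}
    (hA : A.IsHermitian) (htr : A.trace = 1) : ∑ i, hA.eigenvalues i = 1 := by
  simpa using congrArg RCLike.re (hA.trace_eq_sum_eigenvalues.symm.trans htr)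

theorem Matrix.PosSemidef.mulVec_eq_zero_of_add {σ τ : Matrix k k 𝕜} (hσ : σ.PosSemidef)
    (hτ : τ.PosSemidef) {w : k → 𝕜} (h : star w ⬝ᵥ (σ + τ) *ᵥ w = 0) : σ *ᵥ w = 0 := by
  rw [add_mulVec, dotProduct_add] at h
  exact (hσ.dotProduct_mulVec_zero_iff w).1 ((add_eq_zero_iff_of_nonneg
    (hσ.dotProduct_mulVec_nonneg w) (hτ.dotProduct_mulVec_nonneg w)).1 h).1

theorem Matrix.IsHermitian.eq_smul_vecMulVec_of_mulVec_eq_zero {σ : Matrix k k 𝕜}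
    (hσ : σ.IsHermitian) {x : k → 𝕜} (hx : star x ⬝ᵥ x = 1)
    (hker : ∀ w, star x ⬝ᵥ w = 0 → σ *ᵥ w = 0) :
    σ = (star x ⬝ᵥ σ *ᵥ x) • vecMulVec x (star x) := by
  have hproj : ∀ v, vecMulVec x (star x) *ᵥ v = (star x ⬝ᵥ v) • x := fun v => by
    rw [vecMulVec_mulVec, op_smul_eq_smul]
  have hright : σ * vecMulVec x (star x) = σ := by
    refine ext_iff_mulVec.2 fun v => ?_
    have hperp : star x ⬝ᵥ (v - vecMulVec x (star x) *ᵥ v) = 0 := by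
      rw [hproj, dotProduct_sub, dotProduct_smul, hx, smul_eq_mul, mul_one, sub_self]
    rw [← mulVec_mulVec, eq_comm, ← sub_eq_zero, ← mulVec_sub, hker _ hperp]
  have hleft : vecMulVec x (star x) * σ = σ := by
    simpa [conjTranspose_vecMulVec, hσ.eq] using congrArg (·ᴴ) hright
  calc σ = vecMulVec x (star x) * (σ * vecMulVec x (star x)) := by rw [hright, hleft]
    _ = (star x ⬝ᵥ σ *ᵥ x) • vecMulVec x (star x) := by
      rw [mul_vecMulVec, mul_vecMulVec, hproj, smul_vecMulVec]

variable (k) in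
def densityMatrices : Set (Matrix k k ℂ) :=
  {A | A.PosSemidef ∧ A.trace = 1}

variable (k) in
def pureStates : Set (Matrix k k ℂ) :=
  {P | ∃ x : k → ℂ, star x ⬝ᵥ x = 1 ∧ P = vecMulVec x (star x)}

theorem convex_densityMatrices : Convex ℝ (densityMatrices k) := by
  rintro A ⟨hA, hAtr⟩ B ⟨hB, hBtr⟩ a b ha hb hab
  refine ⟨(hA.smul ha).add (hB.smul hb), ?_⟩
  rw [trace_add, trace_smul, trace_smul, hAtr, hBtr, ← add_smul, hab, one_smul]

theorem pureStates_subset_densityMatrices : pureStates k ⊆ densityMatrices k := by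
  rintro _ ⟨x, hx, rfl⟩
  exact ⟨posSemidef_vecMulVec_self_star x, by rw [trace_vecMulVec_self_star, hx]⟩

theorem densityMatrices_subset_convexHull_pureStates [DecidableEq k] :
    densityMatrices k ⊆ convexHull ℝ (pureStates k) := by
  rintro A ⟨hA, htr⟩
  rw [hA.isHermitian.eq_sum_eigenvalues_smul_vecMulVec]
  exact (convex_convexHull ℝ _).sum_mem (fun i _ => hA.eigenvalues_nonneg i)
    (hA.isHermitian.sum_eigenvalues_eq_one htr) fun i _ =>
    subset_convexHull ℝ _ ⟨_, hA.isHermitian.star_eigenvectorBasis_dotProduct_self i, rfl⟩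

theorem Matrix.IsHermitian.mem_pureStates_of_rank_eq_one [DecidableEq k] {A : Matrix k k ℂ}
    (hA : A.IsHermitian) (hrank : A.rank = 1) (htr : A.trace = 1) : A ∈ pureStates k := by
  rw [hA.rank_eq_card_non_zero_eigs, Fintype.card_eq_one_iff] at hrank
  obtain ⟨⟨i, _⟩, hi⟩ := hrank
  have hzero : ∀ j ≠ i, hA.eigenvalues j = 0 := fun j hj =>
    by_contra fun h => hj (congrArg Subtype.val (hi ⟨j, h⟩))
  have hA_eq := hA.eq_sum_eigenvalues_smul_vecMulVec
  rw [Finset.sum_eq_single i (fun j _ hj => by rw [hzero j hj, zero_smul]) (by simp)] at hA_eq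
  have hone := hA.sum_eigenvalues_eq_one htr
  rw [Finset.sum_eq_single i (fun j _ hj => hzero j hj) (by simp)] at hone
  exact ⟨_, hA.star_eigenvectorBasis_dotProduct_self i, hA_eq.trans (by rw [hone, one_smul])⟩

theorem isPureState_iff_mem_pureStates {m : ℕ} {P : Matrix (Fin m) (Fin m) ℂ} :
    IsPureState P ↔ P ∈ pureStates (Fin m) := by
  refine ⟨fun ⟨hP, hrank, htr⟩ => hP.mem_pureStates_of_rank_eq_one hrank htr, ?_⟩
  rintro ⟨x, hx, rfl⟩
  have hx0 : x ≠ 0 := by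
    rintro rfl
    simp at hx
  exact ⟨(posSemidef_vecMulVec_self_star x).isHermitian,
    rank_vecMulVec_eq_one hx0 (star_ne_zero.2 hx0), by rw [trace_vecMulVec_self_star, hx]⟩

theorem pureStates_subset_extremePoints_densityMatrices :
    pureStates k ⊆ (densityMatrices k).extremePoints ℝ := by
  rintro _ ⟨x, hx, rfl⟩
  refine ⟨pureStates_subset_densityMatrices ⟨x, hx, rfl⟩, ?_⟩
  rintro σ ⟨hσ, hσtr⟩ τ ⟨hτ, -⟩ ⟨a, b, ha, hb, -, hab⟩
  have hker : ∀ w, star x ⬝ᵥ w = 0 → σ *ᵥ w = 0 := by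
    intro w hw
    have h : star w ⬝ᵥ (a • σ + b • τ) *ᵥ w = 0 := by
      rw [hab, vecMulVec_mulVec, hw]
      simp
    simpa [smul_mulVec, ha.ne'] using (hσ.smul ha.le).mulVec_eq_zero_of_add (hτ.smul hb.le) h
  have hσ_eq := hσ.isHermitian.eq_smul_vecMulVec_of_mulVec_eq_zero hx hker
  have hc : star x ⬝ᵥ σ *ᵥ x = 1 := by
    have htr := congrArg trace hσ_eq
    rwa [trace_smul, trace_vecMulVec_self_star, hx, hσtr, smul_eq_mul, mul_one, eq_comm] at htr
  rw [hσ_eq, hc, one_smul]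

theorem kronecker_mem_pureStates {P : Matrix k k ℂ} {Q : Matrix l l ℂ} (hP : P ∈ pureStates k)
    (hQ : Q ∈ pureStates l) : P ⊗ₖ Q ∈ pureStates (k × l) := by
  obtain ⟨x, hx, rfl⟩ := hP
  obtain ⟨y, hy, rfl⟩ := hQ
  refine ⟨fun p => x p.1 * y p.2, ?_, ?_⟩
  · calc _ = (star x ⬝ᵥ x) * (star y ⬝ᵥ y) := by
          simp only [dotProduct, Fintype.sum_prod_type, Pi.star_apply, star_mul',
            Finset.sum_mul_sum]
          exact Finset.sum_congr rfl fun _ _ => Finset.sum_congr rfl fun _ _ => by ring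
      _ = 1 := by rw [hx, hy, one_mul]
  · ext ⟨i, j⟩ ⟨i', j'⟩
    simp only [kronecker_apply, vecMulVec_apply, Pi.star_apply, star_mul']
    ring

end

theorem sepStates_subset_densityMatrices (m n : ℕ) :
    SepStates m n ⊆ densityMatrices (Fin m × Fin n) := by
  refine convexHull_min ?_ convex_densityMatrices
  rintro _ ⟨A, B, hA, hB, rfl⟩
  exact ⟨hA.1.kronecker hB.1, by rw [trace_kronecker, hA.2, hB.2, one_mul]⟩

theorem sepStates_eq_convexHull (m n : ℕ) :
    SepStates m n =
      convexHull ℝ (Set.image2 (· ⊗ₖ ·) (pureStates (Fin m)) (pureStates (Fin n))) := by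
  refine (convexHull_min ?_ (convex_convexHull ℝ _)).antisymm (convexHull_mono ?_)
  · rintro _ ⟨A, B, hA, hB, rfl⟩
    exact (kroneckerBilinear (R := ℝ)).apply_mem_convexHull_image2
      (densityMatrices_subset_convexHull_pureStates hA)
      (densityMatrices_subset_convexHull_pureStates hB)
  · rintro _ ⟨P, hP, Q, hQ, rfl⟩
    exact ⟨P, Q, pureStates_subset_densityMatrices hP, pureStates_subset_densityMatrices hQ, rfl⟩

theorem sep_states_convex_and_extremePoints_general (m n : ℕ) :
    (∀ C ∈ SepStates m n, C.IsHermitian) ∧ Convex ℝ (SepStates m n) ∧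
      Set.extremePoints ℝ (SepStates m n) =
        {C | ∃ P Q, IsPureState P ∧ IsPureState Q ∧ C = P ⊗ₖ Q} := by
  have hproducts : {C | ∃ P Q, IsPureState P ∧ IsPureState Q ∧ C = P ⊗ₖ Q} =
      Set.image2 (· ⊗ₖ ·) (pureStates (Fin m)) (pureStates (Fin n)) := by
    ext C
    simp [isPureState_iff_mem_pureStates, eq_comm]
  refine ⟨fun C hC => (sepStates_subset_densityMatrices m n hC).1.isHermitian,
    convex_convexHull ℝ _, ?_⟩
  rw [hproducts]
  refine subset_antisymm (sepStates_eq_convexHull m n ▸ extremePoints_convexHull_subset) ?_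
  rintro _ ⟨P, hP, Q, hQ, rfl⟩
  refine inter_extremePoints_subset_extremePoints_of_subset (sepStates_subset_densityMatrices m n)
    ⟨?_, pureStates_subset_extremePoints_densityMatrices (kronecker_mem_pureStates hP hQ)⟩
  rw [sepStates_eq_convexHull]
  exact subset_convexHull ℝ _ ⟨P, hP, Q, hQ, rfl⟩

/-- The set of separable states `S_{m,n}` is a convex subset of the real vector space of
Hermitian matrices, and its set of extreme points is exactly the set of pure product
states `{P ⊗ Q : P ∈ P_m, Q ∈ P_n}`. -/
theorem sep_states_convex_and_extremePoints (m n : ℕ) (hm : 1 ≤ m) (hn : 1 ≤ n) :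
    (∀ C ∈ SepStates m n, C.IsHermitian) ∧ Convex ℝ (SepStates m n) ∧
      Set.extremePoints ℝ (SepStates m n) =
        {C | ∃ P Q, IsPureState P ∧ IsPureState Q ∧ C = P ⊗ₖ Q} :=
  sep_states_convex_and_extremePoints_general m n
end

section
/- Let k ≥ 1, n₁,…,n_k ≥ 2, N = ∏_{i=1}^k n_i, and let S = conv(⊗_{i=1}^k P_{n_i}) be the set of multipartite separable states in H_N. Let 𝓛 be the set of all ℝ-linear maps L : H_N → H_N satisfying L(S) ⊆ S, and let 𝓛₀ ⊆ 𝓛 be the subset of invertible such maps. Then 𝓛₀ is open and dense in 𝓛 (with respect to the subspace topology on 𝓛 inside the space of ℝ-linear endomorphisms of H_N). -/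
open Matrix

/-- The tensor (Kronecker) product `⊗_{i=1}^k A_i` of matrices `A_i` of sizes `n_i × n_i`:
the `N × N` matrix (`N = ∏ n_i`) with entries
`(⊗ A_i)((x₁,…,x_k),(y₁,…,y_k)) = ∏_i A_i(x_i, y_i)`. -/
def tensorPi {k : ℕ} {n : Fin k → ℕ} (A : ∀ i, Matrix (Fin (n i)) (Fin (n i)) ℂ) :
    Matrix (∀ i, Fin (n i)) (∀ i, Fin (n i)) ℂ :=
  Matrix.of fun x y => ∏ i, A i (x i) (y i)

/-- The set of pure product states `⊗_{i=1}^k P_{n_i}` inside `H_N`. -/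
def PureTensor {k : ℕ} (n : Fin k → ℕ) :
    Set (selfAdjoint (Matrix (∀ i, Fin (n i)) (∀ i, Fin (n i)) ℂ)) :=
  {C | ∃ Q : ∀ i, Matrix (Fin (n i)) (Fin (n i)) ℂ, (∀ i, IsPureState (Q i)) ∧
    (C : Matrix (∀ i, Fin (n i)) (∀ i, Fin (n i)) ℂ) = tensorPi Q}

/-- The standard topology on the space of `ℝ`-linear endomorphisms of `H_N` (as a
finite-dimensional real vector space): the topology induced by pointwise convergence. -/
noncomputable instance instTopEndHerm {k : ℕ} (n : Fin k → ℕ) :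
    TopologicalSpace
      (selfAdjoint (Matrix (∀ i, Fin (n i)) (∀ i, Fin (n i)) ℂ) →ₗ[ℝ]
        selfAdjoint (Matrix (∀ i, Fin (n i)) (∀ i, Fin (n i)) ℂ)) :=
  TopologicalSpace.induced (fun L => ⇑L) inferInstance

section A
variable {m : Type*} [Fintype m] [DecidableEq m]
instance selfAdjointMatrixContinuousSMul :
    ContinuousSMul ℝ ↥(selfAdjoint (Matrix m m ℂ)) := by
  constructor
  apply continuous_induced_rng.mpr
  show Continuous fun p : ℝ × ↥(selfAdjoint (Matrix m m ℂ)) =>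
    ((p.1 • p.2 : ↥(selfAdjoint (Matrix m m ℂ))) : Matrix m m ℂ)
  exact continuous_fst.smul (continuous_subtype_val.comp continuous_snd)
noncomputable def selfAdjointCoeLM :
    ↥(selfAdjoint (Matrix m m ℂ)) →ₗ[ℝ] Matrix m m ℂ where
  toFun := Subtype.val
  map_add' _ _ := rfl
  map_smul' _ _ := rfl
instance selfAdjointMatrixFinDim :
    FiniteDimensional ℝ ↥(selfAdjoint (Matrix m m ℂ)) :=
  FiniteDimensional.of_injective (selfAdjointCoeLM (m := m)) Subtype.val_injective
end A

abbrev EH (k : ℕ) (n : Fin k → ℕ) :=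
  ↥(selfAdjoint (Matrix (∀ i, Fin (n i)) (∀ i, Fin (n i)) ℂ))

theorem cont_det {k : ℕ} (n : Fin k → ℕ) :
    Continuous fun L : EH k n →ₗ[ℝ] EH k n => LinearMap.det L := by
  classical
  let b := Module.finBasis ℝ (EH k n)
  have h1 : ∀ L : EH k n →ₗ[ℝ] EH k n,
      LinearMap.det L = (Matrix.of fun i j => b.coord i (L (b j))).det := by
    intro L
    rw [← LinearMap.det_toMatrix b]
    congr 1
    ext i j
    simp [LinearMap.toMatrix_apply, Module.Basis.coord_apply]
  simp only [h1]
  have h2 : Continuous fun f : EH k n → EH k n =>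
      (Matrix.of fun i j => b.coord i (f (b j))).det := by
    apply Continuous.matrix_det
    apply continuous_matrix
    intro i j
    exact (LinearMap.continuous_of_finiteDimensional (b.coord i)).comp (continuous_apply (b j))
  exact h2.comp continuous_induced_dom

theorem bij_iff_det_ne_zero {E : Type*} [AddCommGroup E] [Module ℝ E]
    [FiniteDimensional ℝ E] (f : E →ₗ[ℝ] E) :
    Function.Bijective f ↔ LinearMap.det f ≠ 0 := by
  constructor
  · intro h
    exact isUnit_iff_ne_zero.mp (LinearEquiv.ofBijective f h).isUnit_det'
  · intro h
    exact (LinearMap.equivOfDetNeZero f h).bijective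

theorem main (k : ℕ) (n : Fin k → ℕ)
    (𝓛 𝓛₀ : Set (EH k n →ₗ[ℝ] EH k n))
    (S : Set (EH k n)) (hconv : Convex ℝ S)
    (h𝓛 : 𝓛 = {L | ∀ A ∈ S, L A ∈ S})
    (h𝓛₀ : 𝓛₀ = {L ∈ 𝓛 | Function.Bijective L}) :
    IsOpen (Subtype.val ⁻¹' 𝓛₀ : Set ↥𝓛) ∧ Dense (Subtype.val ⁻¹' 𝓛₀ : Set ↥𝓛) := by
  classical
  constructor
  · have heq : (Subtype.val ⁻¹' 𝓛₀ : Set ↥𝓛)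
        = Subtype.val ⁻¹' {L : EH k n →ₗ[ℝ] EH k n | LinearMap.det L ≠ 0} := by
      ext x
      simp only [Set.mem_preimage, h𝓛₀, Set.mem_setOf_eq, Set.mem_sep_iff]
      exact ⟨fun h => (bij_iff_det_ne_zero _).mp h.2,
        fun h => ⟨x.2, (bij_iff_det_ne_zero _).mpr h⟩⟩
    rw [heq]
    exact (isOpen_compl_singleton.preimage (cont_det n)).preimage continuous_subtype_val
  · intro x
    obtain ⟨L, hLmem'⟩ := x
    have hL : ∀ A ∈ S, L A ∈ S := by have h := hLmem'; rw [h𝓛] at h; exact h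
    -- the path
    set φ : ℝ → (EH k n →ₗ[ℝ] EH k n) := fun t => L + t • (LinearMap.id - L) with hφdef
    have hφmem : ∀ t ∈ Set.Icc (0:ℝ) 1, φ t ∈ 𝓛 := by
      intro t ht
      rw [h𝓛]
      intro A hA
      have key : (φ t) A = (1 - t) • (L A) + t • A := by
        simp only [hφdef, LinearMap.add_apply, LinearMap.smul_apply, LinearMap.sub_apply,
          LinearMap.id_apply]
        module
      rw [key]
      exact hconv (hL A hA) hA (by linarith [ht.2]) ht.1 (by ring)
    -- clamp
    set c : ℝ → ℝ := fun t => min 1 (max t 0) with hcdef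
    have hcmem : ∀ t, c t ∈ Set.Icc (0:ℝ) 1 :=
      fun t => ⟨le_min one_pos.le (le_max_right _ _), min_le_left _ _⟩
    set ψ : ℝ → ↥𝓛 := fun t => ⟨φ (c t), hφmem _ (hcmem t)⟩ with hψdef
    have hφcont : Continuous φ := by
      apply continuous_induced_rng.mpr
      apply continuous_pi
      intro v
      have : (fun t => (φ t) v) = fun t : ℝ => L v + t • (v - L v) := by
        funext t
        simp [hφdef]
      rw [show ((fun L : EH k n →ₗ[ℝ] EH k n => ⇑L) ∘ φ) = fun t => ⇑(φ t) from rfl]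
      show Continuous fun t => (φ t) v
      rw [this]
      exact continuous_const.add (continuous_id.smul continuous_const)
    have hψcont : Continuous ψ := by
      apply Continuous.subtype_mk
      exact hφcont.comp (continuous_const.min (continuous_id.max continuous_const))
    -- polynomial
    let b := Module.finBasis ℝ (EH k n)
    set A : Matrix _ _ ℝ := LinearMap.toMatrix b b L with hA
    set B : Matrix _ _ ℝ := LinearMap.toMatrix b b (LinearMap.id - L) with hB
    set q : Polynomial ℝ :=
      (A.map Polynomial.C + (Polynomial.X : Polynomial ℝ) • B.map Polynomial.C).det with hq
    have heval : ∀ t : ℝ, q.eval t = LinearMap.det (φ t) := by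
      intro t
      have h1 : LinearMap.det (φ t) = (A + t • B).det := by
        rw [← LinearMap.det_toMatrix b, hφdef]
        congr 1
        rw [_root_.map_add, LinearEquiv.map_smul, ← hA, ← hB]
      rw [h1, hq]
      have h2 := (Polynomial.evalRingHom t).map_det
        (A.map Polynomial.C + (Polynomial.X : Polynomial ℝ) • B.map Polynomial.C)
      rw [show Polynomial.eval t
          (A.map Polynomial.C + (Polynomial.X : Polynomial ℝ) • B.map Polynomial.C).det
          = Polynomial.evalRingHom t
            (A.map Polynomial.C + (Polynomial.X : Polynomial ℝ) • B.map Polynomial.C).det from rfl, h2]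
      congr 1
      ext i j
      simp only [RingHom.mapMatrix_apply, Matrix.map_apply, Matrix.add_apply,
        Matrix.smul_apply, smul_eq_mul, Polynomial.coe_evalRingHom, Polynomial.eval_add,
        Polynomial.eval_mul, Polynomial.eval_C, Polynomial.eval_X]
    have hφ1 : φ 1 = LinearMap.id := by
      ext v
      simp [hφdef]
    have hqne : q ≠ 0 := by
      intro h
      have := heval 1
      rw [h, hφ1] at this
      simp [LinearMap.det_id] at this
    have hF : {t : ℝ | q.IsRoot t}.Finite := Polynomial.finite_setOf_isRoot hqne
    -- the good set
    set s0 : Set ℝ := Set.Ioc (0:ℝ) 1 \ {t : ℝ | q.IsRoot t} with hs0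
    have hmaps : Set.MapsTo ψ s0 (Subtype.val ⁻¹' 𝓛₀) := by
      intro t ht
      obtain ⟨⟨ht0, ht1⟩, htF⟩ := ht
      have hct : c t = t := by
        rw [hcdef]
        simp only [max_eq_left ht0.le, min_eq_right ht1]
      simp only [Set.mem_preimage, hψdef, hct, h𝓛₀, Set.mem_sep_iff]
      refine ⟨hφmem t ⟨ht0.le, ht1⟩, ?_⟩
      rw [bij_iff_det_ne_zero, ← heval]
      exact htF
    have h0cl : (0:ℝ) ∈ closure s0 := by
      rw [Metric.mem_closure_iff]
      intro ε hε
      have hne : (Set.Ioc (0:ℝ) (min (ε/2) 1) \ {t : ℝ | q.IsRoot t}).Nonempty :=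
        ((Set.Ioc_infinite (lt_min (by linarith) one_pos)).diff hF).nonempty
      obtain ⟨t, ⟨ht0, ht1⟩, htF⟩ := hne
      refine ⟨t, ⟨⟨ht0, ht1.trans (min_le_right _ _)⟩, htF⟩, ?_⟩
      rw [Real.dist_eq, abs_sub_comm, abs_of_pos (by linarith [ht0])]
      have := ht1.trans (min_le_left _ _)
      linarith
    have hx0 : (⟨L, hLmem'⟩ : ↥𝓛) = ψ 0 := by
      apply Subtype.ext
      have hc0 : c 0 = 0 := by simp [hcdef]
      show L = φ (c 0)
      rw [hc0]
      ext v
      simp [hφdef]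
    rw [hx0]
    exact map_mem_closure hψcont h0cl hmaps


/-- Corollary 3.3 (second part): within the set `𝓛` of all `ℝ`-linear maps `L : H_N → H_N`
with `L(S) ⊆ S` (where `S = conv(⊗_{i=1}^k P_{n_i})`), the subset `𝓛₀` of invertible maps
is open and dense in the subspace topology of `𝓛`. -/
theorem invertible_sep_preserving_maps_open_dense (k : ℕ) (hk : 1 ≤ k) (n : Fin k → ℕ)
    (h2 : ∀ i, 2 ≤ n i) (N : ℕ) (hN : N = ∏ i, n i)
    (𝓛 𝓛₀ : Set (selfAdjoint (Matrix (∀ i, Fin (n i)) (∀ i, Fin (n i)) ℂ) →ₗ[ℝ]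
          selfAdjoint (Matrix (∀ i, Fin (n i)) (∀ i, Fin (n i)) ℂ)))
    (h𝓛 : 𝓛 = {L | ∀ A ∈ convexHull ℝ (PureTensor n), L A ∈ convexHull ℝ (PureTensor n)})
    (h𝓛₀ : 𝓛₀ = {L ∈ 𝓛 | Function.Bijective L}) :
    IsOpen (Subtype.val ⁻¹' 𝓛₀ : Set ↥𝓛) ∧ Dense (Subtype.val ⁻¹' 𝓛₀ : Set ↥𝓛) := by
  exact main k n 𝓛 𝓛₀ (convexHull ℝ (PureTensor n)) (convex_convexHull ℝ _) h𝓛 h𝓛₀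
end
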